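/- For all n ≥ 2, the minimum length of a word-representant of the graph K_n □ K₂ satisfies l(K_n □ K₂) ≤ 5n − 4. -/

import Mathlib

open SimpleGraph

variable {V : Type*}

/-- Two distinct letters `x` and `y` alternate in a word `w` if the subsequence of `w`
consisting of all occurrences of `x` and `y` is strictly alternating. -/
def Alternates [DecidableEq V] (x y : V) (w : List V) : Prop :=
  (w.filter (fun z => decide (z = x ∨ z = y))).Chain' (· ≠ ·)

/-- A word `w` represents the graph `G` if it contains every vertex at least once and
two distinct vertices are adjacent iff they alternate in `w`. -/
def Represents [DecidableEq V] (G : SimpleGraph V) (w : List V) : Prop :=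
  (∀ v : V, v ∈ w) ∧ ∀ x y : V, x ≠ y → (G.Adj x y ↔ Alternates x y w)

/-- A graph is word-representable if some word represents it. -/
def WordRepresentable [DecidableEq V] (G : SimpleGraph V) : Prop :=
  ∃ w : List V, Represents G w

/-- `l(G)`: the minimum length of a word-representant of `G`. -/
noncomputable def reprLen [DecidableEq V] (G : SimpleGraph V) : ℕ :=
  sInf {n | ∃ w : List V, Represents G w ∧ w.length = n}

/-!
Encode the vertex `(i, c)` of `K_n □ K₂` as the letter `2 * i + c`, and write `a_i = 2 * i`,
`b_i = 2 * i + 1`. The representing word is the concatenation of three blocks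
* `a_0 b_0 a_1 b_1 ⋯ a_{n-2} b_{n-2} a_{n-1}`,
* `a_0 a_1 ⋯ a_{n-2} b_{n-1}`,
* `a_{n-1} b_0 a_0 b_1 a_1 ⋯ b_{n-3} a_{n-3}`,
of total length `(2n - 1) + n + (2n - 3) = 5n - 4`. No block repeats a letter, and each block is
increasing for a suitable key (the letter itself for the first two, the letter with its parity
bit flipped for the tail of the third). Hence the restriction of a block to two letters is read
off from which of them the block contains, and whether the two letters alternate in the word
becomes a finite check on the positions of `i` and `j` relative to `n - 2` and `n - 1`.
-/

theorem List.filter_eq_or_eq_of_pairwise_lt {α β : Type*} [DecidableEq α] [Preorder β]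
    {f : α → β} {l : List α} (hl : l.Pairwise (fun a b => f a < f b)) {u v : α}
    (huv : f u < f v) :
    l.filter (fun z => decide (z = u ∨ z = v)) =
      (if u ∈ l then [u] else []) ++ (if v ∈ l then [v] else []) := by
  induction l with
  | nil => simp
  | cons a t ih =>
    obtain ⟨ha, ht⟩ := List.pairwise_cons.mp hl
    have hat : a ∉ t := fun h => lt_irrefl _ (ha a h)
    rw [List.filter_cons, ih ht]
    by_cases hau : a = u
    · subst hau
      have hva : v ≠ a := fun h => lt_irrefl (f a) (h ▸ huv)
      simp [hat, hva]
    by_cases hav : a = v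
    · subst hav
      have hut : u ∉ t := fun h => lt_asymm huv (ha u h)
      simp [hat, hut, Ne.symm hau]
    simp [hau, hav, Ne.symm hau, Ne.symm hav]

theorem List.filter_eq_or_eq_of_pairwise_gt {α β : Type*} [DecidableEq α] [Preorder β]
    {f : α → β} {l : List α} (hl : l.Pairwise (fun a b => f a < f b)) {u v : α}
    (hvu : f v < f u) :
    l.filter (fun z => decide (z = u ∨ z = v)) =
      (if v ∈ l then [v] else []) ++ (if u ∈ l then [u] else []) := by
  simpa only [or_comm] using List.filter_eq_or_eq_of_pairwise_lt hl hvu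

section Alternates

variable {α β : Type*} [DecidableEq α] [DecidableEq β]

theorem alternates_iff_isChain {x y : α} {w : List α} :
    Alternates x y w ↔ (w.filter (fun z => decide (z = x ∨ z = y))).IsChain (· ≠ ·) :=
  Iff.rfl

theorem alternates_comm {x y : α} {w : List α} : Alternates x y w ↔ Alternates y x w := by
  simp only [alternates_iff_isChain, or_comm]

theorem alternates_map_iff {f : α → β} (hf : Function.Injective f) (x y : α) (w : List α) :
    Alternates (f x) (f y) (w.map f) ↔ Alternates x y w := by
  have hpred : ((fun z => decide (z = f x ∨ z = f y)) ∘ f) = fun z => decide (z = x ∨ z = y) := by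
    funext z; simp [hf.eq_iff]
  simp only [alternates_iff_isChain, List.filter_map, hpred, List.isChain_map, hf.ne_iff]

end Alternates

namespace KnBoxK2

open List

def swapParity (z : ℕ) : ℕ := z + 1 - 2 * (z % 2)

def middleBlock (n : ℕ) : List ℕ := (range (n - 1)).map (2 * ·) ++ [2 * n - 1]

def word (n : ℕ) : List ℕ :=
  range (2 * n - 1) ++ middleBlock n ++ ((2 * n - 2) :: (range (2 * (n - 2))).map swapParity)

lemma swapParity_swapParity (z : ℕ) : swapParity (swapParity z) = z := by
  unfold swapParity; omega

lemma pairwise_map_swapParity (N : ℕ) :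
    ((range N).map swapParity).Pairwise (fun a b => swapParity a < swapParity b) := by
  simpa [pairwise_map, swapParity_swapParity] using pairwise_lt_range

lemma mem_map_swapParity {m z : ℕ} : z ∈ (range (2 * m)).map swapParity ↔ z < 2 * m := by
  simp only [mem_map, mem_range]
  constructor
  · rintro ⟨a, ha, rfl⟩; unfold swapParity; omega
  · exact fun h => ⟨swapParity z, by unfold swapParity; omega, swapParity_swapParity z⟩

lemma pairwise_middleBlock (n : ℕ) : (middleBlock n).Pairwise (· < ·) := by
  rw [middleBlock, pairwise_append, pairwise_map]
  refine ⟨pairwise_lt_range.imp (by omega), pairwise_singleton _ _, ?_⟩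
  simp only [mem_map, mem_range, mem_singleton, forall_exists_index, and_imp]
  omega

lemma mem_middleBlock {n z : ℕ} :
    z ∈ middleBlock n ↔ (z % 2 = 0 ∧ z < 2 * n - 2) ∨ z = 2 * n - 1 := by
  simp only [middleBlock, mem_append, mem_map, mem_range, mem_singleton]
  constructor
  · rintro (⟨a, ha, rfl⟩ | h) <;> omega
  · rintro (h | h)
    · exact Or.inl ⟨z / 2, by omega, by omega⟩
    · exact Or.inr h

lemma length_word {n : ℕ} (hn : 2 ≤ n) : (word n).length = 5 * n - 4 := by
  simp only [word, middleBlock, length_append, length_range, length_map, length_cons,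
    length_nil]
  omega

lemma lt_of_mem_word {n k : ℕ} (hn : n ≠ 0) (hk : k ∈ word n) : k < 2 * n := by
  simp only [word, mem_append, mem_range, mem_middleBlock, mem_cons, mem_map_swapParity] at hk
  omega

lemma mem_word {n k : ℕ} (hk : k < 2 * n) : k ∈ word n := by
  by_cases h : k = 2 * n - 1
  · simp [word, mem_middleBlock, h]
  · simp only [word, mem_append, mem_range]; omega

lemma filter_word {n u v : ℕ} (huv : u < v) (hswap : swapParity u < swapParity v) :
    (word n).filter (fun z => decide (z = u ∨ z = v)) =
      ((if u < 2 * n - 1 then [u] else []) ++ (if v < 2 * n - 1 then [v] else [])) ++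
      ((if (u % 2 = 0 ∧ u < 2 * n - 2) ∨ u = 2 * n - 1 then [u] else []) ++
        (if (v % 2 = 0 ∧ v < 2 * n - 2) ∨ v = 2 * n - 1 then [v] else [])) ++
      (if 2 * n - 2 = u ∨ 2 * n - 2 = v then
        (2 * n - 2) :: ((if u < 2 * (n - 2) then [u] else []) ++
          (if v < 2 * (n - 2) then [v] else []))
      else (if u < 2 * (n - 2) then [u] else []) ++ (if v < 2 * (n - 2) then [v] else [])) := by
  rw [word, filter_append, filter_append, filter_cons,
    filter_eq_or_eq_of_pairwise_lt (f := id) pairwise_lt_range huv,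
    filter_eq_or_eq_of_pairwise_lt (f := id) (pairwise_middleBlock n) huv,
    filter_eq_or_eq_of_pairwise_lt (pairwise_map_swapParity _) hswap]
  simp only [mem_range, mem_middleBlock, mem_map_swapParity, decide_eq_true_eq]

lemma alternates_even_even {n i j : ℕ} (hij : i < j) (hj : j < n) :
    Alternates (2 * i) (2 * j) (word n) := by
  rw [alternates_iff_isChain, filter_word (by omega) (by unfold swapParity; omega)]
  rcases (show j < n - 2 ∨ j = n - 2 ∨ j = n - 1 by omega) with h | h | h <;>
  rcases (show i < n - 2 ∨ i = n - 2 by omega) with h' | h' <;>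
    simp (disch := omega) only [if_pos, if_neg] <;> simp [isChain_cons_cons] <;> omega

lemma alternates_odd_odd {n i j : ℕ} (hij : i < j) (hj : j < n) :
    Alternates (2 * i + 1) (2 * j + 1) (word n) := by
  rw [alternates_iff_isChain, filter_word (by omega) (by unfold swapParity; omega)]
  rcases (show j < n - 2 ∨ j = n - 2 ∨ j = n - 1 by omega) with h | h | h <;>
  rcases (show i < n - 2 ∨ i = n - 2 by omega) with h' | h' <;>
    simp (disch := omega) only [if_pos, if_neg] <;> simp [isChain_cons_cons] <;> omega

lemma alternates_even_odd_self {n i : ℕ} (hn : 2 ≤ n) (hi : i < n) :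
    Alternates (2 * i) (2 * i + 1) (word n) := by
  have hlt : 2 * i < 2 * i + 1 := by omega
  rw [alternates_iff_isChain, word, filter_append, filter_append, filter_cons,
    filter_eq_or_eq_of_pairwise_lt (f := id) pairwise_lt_range hlt,
    filter_eq_or_eq_of_pairwise_lt (f := id) (pairwise_middleBlock n) hlt,
    filter_eq_or_eq_of_pairwise_gt (pairwise_map_swapParity _)
      (show swapParity (2 * i + 1) < swapParity (2 * i) by unfold swapParity; omega)]
  simp only [mem_range, mem_map_swapParity, decide_eq_true_eq, mem_middleBlock]
  rcases (show i < n - 2 ∨ i = n - 2 ∨ i = n - 1 by omega) with h | h | h <;>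
    simp (disch := omega) only [if_pos, if_neg] <;> simp [isChain_cons_cons] <;> omega

lemma not_alternates_even_odd {n i j : ℕ} (hij : i ≠ j) (hi : i < n) (hj : j < n) :
    ¬ Alternates (2 * i) (2 * j + 1) (word n) := by
  rcases Nat.lt_or_gt_of_ne hij with h | h
  · rw [alternates_iff_isChain, filter_word (by omega) (by unfold swapParity; omega)]
    rcases (show j < n - 2 ∨ j = n - 2 ∨ j = n - 1 by omega) with h | h | h <;>
      simp (disch := omega) only [if_pos, if_neg] <;> simp [isChain_cons_cons]
  · rw [alternates_comm, alternates_iff_isChain,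
      filter_word (by omega) (by unfold swapParity; omega)]
    rcases (show i < n - 1 ∨ i = n - 1 by omega) with h | h <;>
      simp (disch := omega) only [if_pos, if_neg] <;> simp [isChain_cons_cons] <;> omega

def encode {n : ℕ} (x : Fin n × Fin 2) : ℕ := 2 * x.1 + x.2

lemma encode_injective (n : ℕ) : Function.Injective (encode (n := n)) := by
  intro x y h
  simp only [encode] at h
  exact Prod.ext (Fin.ext (by omega)) (Fin.ext (by omega))

lemma encode_lt {n : ℕ} (x : Fin n × Fin 2) : encode x < 2 * n := by
  simp only [encode]; omega

lemma alternates_encode_iff {n : ℕ} (hn : 2 ≤ n) {x y : Fin n × Fin 2} (hxy : x ≠ y) :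
    Alternates (encode x) (encode y) (word n) ↔ x.1 = y.1 ∨ x.2 = y.2 := by
  wlog hlt : encode x < encode y generalizing x y
  · rw [alternates_comm, eq_comm, eq_comm (a := x.2)]
    exact this hxy.symm (lt_of_le_of_ne (not_lt.mp hlt) ((encode_injective n).ne hxy.symm))
  obtain ⟨⟨i, hi⟩, c⟩ := x
  obtain ⟨⟨j, hj⟩, d⟩ := y
  simp only [encode, ne_eq, Prod.mk.injEq, Fin.mk.injEq] at hlt hxy ⊢
  fin_cases c <;> fin_cases d <;> simp only [add_zero] at hlt hxy ⊢
  · simpa using alternates_even_even (by omega) hj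
  · rcases (show i = j ∨ i < j by omega) with rfl | h
    · simpa using alternates_even_odd_self hn hi
    · simpa [h.ne] using not_alternates_even_odd h.ne hi hj
  · simpa [(show i ≠ j by omega)] using
      mt alternates_comm.mp (not_alternates_even_odd (show j ≠ i by omega) hj hi)
  · simpa using alternates_odd_odd (by omega) hj

def vertexWord (n : ℕ) [NeZero n] : List (Fin n × Fin 2) :=
  (word n).pmap (fun k hk => (⟨k / 2, by omega⟩, ⟨k % 2, by omega⟩))
    fun _ => lt_of_mem_word (NeZero.ne n)

lemma map_encode_vertexWord (n : ℕ) [NeZero n] : (vertexWord n).map encode = word n := by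
  rw [vertexWord, map_pmap, pmap_eq_self]
  intro k _
  simp only [encode]
  omega

theorem represents_vertexWord {n : ℕ} [NeZero n] (hn : 2 ≤ n) :
    Represents ((⊤ : SimpleGraph (Fin n)) □ (⊤ : SimpleGraph (Fin 2))) (vertexWord n) := by
  refine ⟨fun x => ?_, fun x y hxy => ?_⟩
  · rw [← mem_map_of_injective (encode_injective n), map_encode_vertexWord]
    exact mem_word (encode_lt x)
  · rw [← alternates_map_iff (encode_injective n), map_encode_vertexWord,
      alternates_encode_iff hn hxy, boxProd_adj]
    simp only [top_adj]
    have := Prod.ext_iff.not.mp hxy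
    tauto

end KnBoxK2

theorem stmt12 (n : ℕ) (hn : 2 ≤ n) :
    reprLen ((⊤ : SimpleGraph (Fin n)) □ (⊤ : SimpleGraph (Fin 2))) ≤ 5 * n - 4 :=
  have : NeZero n := ⟨by omega⟩
  Nat.sInf_le ⟨_, KnBoxK2.represents_vertexWord hn, by
    rw [KnBoxK2.vertexWord, List.length_pmap, KnBoxK2.length_word hn]⟩
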